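/- Fix q ∈ (2,4), α > 0 and μ > 0, and let u ∈ H¹(ℝ⁺, g dx) satisfy ∫₀^∞ u² g dx ≤ μ and Ẽ_{q,α}(u) < 0. Then |∫₀¹ u(x)² dx − u(0)²| ≤ (2α/q)|u(0)|^q + 2|u(0)| ((2α/q)|u(0)|^q)^{1/2}. -/

import Mathlib

/-!
On `[0,1]` the weight is the constant `4`, so negative energy bounds `∫₀¹ u'²` by
`(2α/q)|u(0)|^q / 4`. Cauchy–Schwarz turns this into the pointwise bound
`|u(x) − u(0)| ≤ √((2α/q)|u(0)|^q)` on `[0,1]`, and writing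
`u(x)² − u(0)² = (u(x) − u(0))² + 2u(0)(u(x) − u(0))` and integrating over `[0,1]` gives the claim.
-/

open MeasureTheory Set

/-- The weight `g(x) = 4` for `x ≤ 1` and `g(x) = 4(2x−1)` for `x > 1`. -/
noncomputable def g (x : ℝ) : ℝ := if x ≤ 1 then 4 else 4 * (2 * x - 1)

/-- `u` belongs to the weighted Sobolev space `H¹(ℝ⁺, g dx)` with derivative
`u'`: it is locally absolutely continuous on `[0,∞)` (primitive of `u'`) and
both `u² g` and `u'² g` are integrable on `(0,∞)`. -/
def InH1g (u u' : ℝ → ℝ) : Prop :=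
  IntegrableOn (fun x => (u x) ^ 2 * g x) (Ioi 0) ∧
    IntegrableOn (fun x => (u' x) ^ 2 * g x) (Ioi 0) ∧
    ∀ a b : ℝ, 0 ≤ a → 0 ≤ b → u b - u a = ∫ x in a..b, u' x

/-- The weighted mass `∫₀^∞ u² g dx`. -/
noncomputable def massg (u : ℝ → ℝ) : ℝ := ∫ x in Ioi (0 : ℝ), (u x) ^ 2 * g x

/-- The reduced energy `Ẽ_{q,α}(u) = (1/2)∫₀^∞ u'² g dx − (α/q)|u(0)|^q`. -/
noncomputable def energyg (q α : ℝ) (u u' : ℝ → ℝ) : ℝ :=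
  (1 / 2) * (∫ x in Ioi (0 : ℝ), (u' x) ^ 2 * g x) - (α / q) * |u 0| ^ q

/-- The set of reduced energies over `X_μ = {u : 0 < ∫ u² g ≤ μ}`;
its infimum is `𝓔̃_{q,α}(μ)`. -/
def levelSetg (q α μ : ℝ) : Set ℝ :=
  {E | ∃ u u' : ℝ → ℝ, InH1g u u' ∧ 0 < massg u ∧ massg u ≤ μ ∧
    E = energyg q α u u'}

theorem integral_abs_le_sqrt_measureReal_mul_integral_sq {α : Type*} [MeasurableSpace α]
    {μ : Measure α} [IsFiniteMeasure μ] {f : α → ℝ} (hf : Integrable (fun x => f x ^ 2) μ) :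
    ∫ x, |f x| ∂μ ≤ √(μ.real univ * ∫ x, f x ^ 2 ∂μ) := by
  have habs : AEStronglyMeasurable (fun x => |f x|) μ := by
    simpa only [Real.sqrt_sq_eq_abs] using
      Real.continuous_sqrt.comp_aestronglyMeasurable hf.aestronglyMeasurable
  have hL2 : MemLp (fun x => |f x|) (ENNReal.ofReal 2) μ := by
    rw [ENNReal.ofReal_ofNat, memLp_two_iff_integrable_sq habs]
    simpa only [sq_abs] using hf
  have hone : MemLp (fun _ => (1 : ℝ)) (ENNReal.ofReal 2) μ := memLp_const 1
  have := integral_mul_norm_le_Lp_mul_Lq Real.HolderConjugate.two_two hL2 hone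
  simp only [Real.norm_eq_abs, abs_abs, abs_one, mul_one, one_pow, integral_const, smul_eq_mul,
    Real.rpow_two, sq_abs] at this
  rw [Real.sqrt_mul measureReal_nonneg, Real.sqrt_eq_rpow, Real.sqrt_eq_rpow, mul_comm]
  exact this

theorem abs_intervalIntegral_le_sqrt_mul_integral_sq {f : ℝ → ℝ} {a b : ℝ} (hab : a ≤ b)
    (hf : IntegrableOn (fun t => f t ^ 2) (Ioc a b)) :
    |∫ t in a..b, f t| ≤ √((b - a) * ∫ t in Ioc a b, f t ^ 2) := by
  calc |∫ t in a..b, f t| ≤ ∫ t in a..b, |f t| := intervalIntegral.abs_integral_le_integral_abs hab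
    _ = ∫ t in Ioc a b, |f t| := intervalIntegral.integral_of_le hab
    _ ≤ √((b - a) * ∫ t in Ioc a b, f t ^ 2) := by
      simpa [Real.volume_real_Ioc_of_le hab] using
        integral_abs_le_sqrt_measureReal_mul_integral_sq hf

theorem g_pos (x : ℝ) : 0 < g x := by
  unfold g; split_ifs with h
  · norm_num
  · linarith [not_le.mp h]

theorem g_of_le_one {x : ℝ} (hx : x ≤ 1) : g x = 4 := if_pos hx

theorem integrableOn_sq_Ioc_of_integrableOn_sq_mul_g {f : ℝ → ℝ} {x : ℝ} (hx : x ≤ 1)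
    (hf : IntegrableOn (fun t => f t ^ 2 * g t) (Ioi 0)) :
    IntegrableOn (fun t => f t ^ 2) (Ioc 0 x) :=
  IntegrableOn.congr_fun ((hf.mono_set Ioc_subset_Ioi_self).div_const 4)
    (fun t ht => by simp [g_of_le_one (ht.2.trans hx)]) measurableSet_Ioc

theorem setIntegral_sq_Ioc_le {f : ℝ → ℝ} {x : ℝ} (hx : x ≤ 1)
    (hf : IntegrableOn (fun t => f t ^ 2 * g t) (Ioi 0)) :
    ∫ t in Ioc 0 x, f t ^ 2 ≤ (∫ t in Ioi 0, f t ^ 2 * g t) / 4 := by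
  calc ∫ t in Ioc 0 x, f t ^ 2 = (∫ t in Ioc 0 x, f t ^ 2 * g t) / 4 := by
        rw [← integral_div]
        refine setIntegral_congr_fun measurableSet_Ioc fun t ht => ?_
        simp [g_of_le_one (ht.2.trans hx)]
    _ ≤ (∫ t in Ioi 0, f t ^ 2 * g t) / 4 := by
        refine div_le_div_of_nonneg_right (setIntegral_mono_set hf ?_
          Ioc_subset_Ioi_self.eventuallyLE) zero_le_four
        exact .of_forall fun t => by have := g_pos t; positivity

theorem InH1g.abs_sub_le {u u' : ℝ → ℝ} (hu : InH1g u u') {x : ℝ} (hx : x ∈ Icc 0 1) :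
    |u x - u 0| ≤ √((∫ t in Ioi 0, u' t ^ 2 * g t) / 4) := by
  rw [hu.2.2 0 x le_rfl hx.1]
  refine (abs_intervalIntegral_le_sqrt_mul_integral_sq hx.1
    (integrableOn_sq_Ioc_of_integrableOn_sq_mul_g hx.2 hu.2.1)).trans (Real.sqrt_le_sqrt ?_)
  have h0 : 0 ≤ ∫ t in Ioc 0 x, u' t ^ 2 := setIntegral_nonneg measurableSet_Ioc fun t _ => sq_nonneg _
  calc (x - 0) * ∫ t in Ioc 0 x, u' t ^ 2 ≤ ∫ t in Ioc 0 x, u' t ^ 2 :=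
        mul_le_of_le_one_left h0 (by linarith [hx.2])
    _ ≤ _ := setIntegral_sq_Ioc_le hx.2 hu.2.1

theorem abs_sq_sub_sq_le {a b d : ℝ} (h : |a - b| ≤ d) : |a ^ 2 - b ^ 2| ≤ d ^ 2 + 2 * |b| * d := by
  have hd : 0 ≤ d := (abs_nonneg _).trans h
  calc |a ^ 2 - b ^ 2| = |(a - b) ^ 2 + 2 * b * (a - b)| := by ring_nf
    _ ≤ |a - b| ^ 2 + 2 * |b| * |a - b| := by
      refine (abs_add_le _ _).trans_eq ?_
      rw [abs_pow, abs_mul, abs_mul, abs_two]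
    _ ≤ d ^ 2 + 2 * |b| * d := by gcongr

theorem abs_intervalIntegral_sub_le_of_abs_sub_le {f : ℝ → ℝ} {a b c M : ℝ} (hab : a ≤ b)
    (hf : IntervalIntegrable f volume a b) (h : ∀ x ∈ Ioc a b, |f x - c| ≤ M) :
    |(∫ x in a..b, f x) - (b - a) * c| ≤ M * (b - a) := by
  have := intervalIntegral.norm_integral_le_of_norm_le_const (a := a) (b := b)
    (f := fun x => f x - c) fun x hx => h x (by rwa [uIoc_of_le hab] at hx)
  rw [intervalIntegral.integral_sub hf intervalIntegrable_const, intervalIntegral.integral_const,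
    abs_of_nonneg (sub_nonneg.mpr hab)] at this
  simpa using this

theorem stmt15_general (q α : ℝ)
    (u u' : ℝ → ℝ) (hu : InH1g u u')
    (hE : energyg q α u u' < 0) :
    |(∫ x in (0 : ℝ)..1, (u x) ^ 2) - (u 0) ^ 2| ≤
      (2 * α / q) * |u 0| ^ q +
        2 * |u 0| * Real.sqrt ((2 * α / q) * |u 0| ^ q) := by
  set D := ∫ t in Ioi 0, u' t ^ 2 * g t
  set C := (2 * α / q) * |u 0| ^ q
  have hD : 0 ≤ D := setIntegral_nonneg measurableSet_Ioi fun t _ => by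
    have := g_pos t; positivity
  have hDC : D / 4 ≤ C := by
    unfold energyg at hE
    linarith [show C = 2 * (α / q * |u 0| ^ q) by ring]
  have hpt : ∀ x ∈ Ioc (0 : ℝ) 1, |u x ^ 2 - u 0 ^ 2| ≤ C + 2 * |u 0| * √C := fun x hx =>
    calc |u x ^ 2 - u 0 ^ 2| ≤ √(D / 4) ^ 2 + 2 * |u 0| * √(D / 4) :=
          abs_sq_sub_sq_le (hu.abs_sub_le (Ioc_subset_Icc_self hx))
      _ ≤ C + 2 * |u 0| * √C := by
          rw [Real.sq_sqrt (by positivity)]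
          gcongr
  have hint : IntervalIntegrable (fun x => u x ^ 2) volume 0 1 :=
    (intervalIntegrable_iff_integrableOn_Ioc_of_le zero_le_one).mpr
      (integrableOn_sq_Ioc_of_integrableOn_sq_mul_g le_rfl hu.1)
  simpa using abs_intervalIntegral_sub_le_of_abs_sub_le zero_le_one hint hpt

/-- If `u ∈ H¹(ℝ⁺, g dx)` has weighted mass at most `μ` and negative reduced
energy, then `|∫₀¹ u² − u(0)²| ≤ (2α/q)|u(0)|^q + 2|u(0)|((2α/q)|u(0)|^q)^{1/2}`. -/
theorem stmt15 (q α μ : ℝ) (hq : 2 < q) (hq' : q < 4) (hα : 0 < α) (hμ : 0 < μ)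
    (u u' : ℝ → ℝ) (hu : InH1g u u') (hm : massg u ≤ μ)
    (hE : energyg q α u u' < 0) :
    |(∫ x in (0 : ℝ)..1, (u x) ^ 2) - (u 0) ^ 2| ≤
      (2 * α / q) * |u 0| ^ q +
        2 * |u 0| * Real.sqrt ((2 * α / q) * |u 0| ^ q) :=
  stmt15_general q α u u' hu hE
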